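/- Let S be a numerical semigroup and I ∈ G₀(S). The following are equivalent: (i) I is an atom; (ii) for every ⋆₁, ⋆₂ ∈ Star(S), I is (⋆₁ ∧ ⋆₂)-closed if and only if I is ⋆₁-closed or ⋆₂-closed; (iii) for every J₁, J₂ ∈ F₀(S) such that ⋆_I ≥ ⋆_{J₁} ∧ ⋆_{J₂}, we have ⋆_I ≥ ⋆_{J₁} or ⋆_I ≥ ⋆_{J₂}; (iv) if I = J₁ ∩ J₂ for fractional ideals J₁, J₂, then I is ⋆_{J₁}-closed or ⋆_{J₂}-closed; (v) for every ⋆₁, …, ⋆ₙ ∈ Star(S), I is (⋆₁ ∧ ⋯ ∧ ⋆ₙ)-closed if and only if I is ⋆ᵢ-closed for some i; (vi) for every set Δ of fractional ideals of S, I = I^{⋆_Δ} if and only if I ≤⋆ J for some J ∈ Δ. -/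

import Mathlib

/-- A numerical semigroup: a subset of ℕ containing 0, closed under addition,
with finite complement. -/
structure NumSgp where
  carrier : Set ℕ
  zero_mem : 0 ∈ carrier
  add_mem : ∀ a ∈ carrier, ∀ b ∈ carrier, a + b ∈ carrier
  cofinite : carrierᶜ.Finite

/-- The copy of `S` inside ℤ. -/
def natS (S : NumSgp) : Set ℤ := (fun n : ℕ => (n : ℤ)) '' S.carrier

/-- A fractional ideal of `S`: a nonempty subset of ℤ, bounded below, with `I + S ⊆ I`. -/
def IsFracIdeal (S : NumSgp) (I : Set ℤ) : Prop :=
  I.Nonempty ∧ BddBelow I ∧ ∀ i ∈ I, ∀ s ∈ natS S, i + s ∈ I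

/-- `(I − J) = {x ∈ ℤ : x + J ⊆ I}`. -/
def idealSub (I J : Set ℤ) : Set ℤ := {x : ℤ | ∀ j ∈ J, x + j ∈ I}

/-- `F₀(S)`: fractional ideals `I` with `S ⊆ I ⊆ ℕ` (hence with minimal element 0). -/
def F0 (S : NumSgp) : Set (Set ℤ) :=
  {I | IsFracIdeal S I ∧ natS S ⊆ I ∧ I ⊆ {x : ℤ | 0 ≤ x}}

/-- The `v`-operation (divisorial closure): `I ↦ (S − (S − I))`. -/
def vOp (S : NumSgp) (I : Set ℤ) : Set ℤ := idealSub (natS S) (idealSub (natS S) I)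

/-- An ideal is divisorial if it is `v`-closed. -/
def Divisorial (S : NumSgp) (I : Set ℤ) : Prop := vOp S I = I

/-- `G₀(S)`: the nondivisorial ideals in `F₀(S)`. -/
def G0 (S : NumSgp) : Set (Set ℤ) := {I | I ∈ F0 S ∧ ¬ Divisorial S I}

/-- The action of the star operation `⋆_I` generated by `I`:
`J ↦ J^{⋆_I} = J^v ∩ (I − (I − J))`. -/
def starI (S : NumSgp) (I J : Set ℤ) : Set ℤ := vOp S J ∩ idealSub I (idealSub I J)

/-- The action of the star operation `⋆_Δ = inf_{I ∈ Δ} ⋆_I` generated by a set `Δ` of ideals: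
`J ↦ J^{⋆_Δ} = J^v ∩ ⋂_{I ∈ Δ} (I − (I − J))`. -/
def starD (S : NumSgp) (Δ : Set (Set ℤ)) (J : Set ℤ) : Set ℤ :=
  vOp S J ∩ ⋂ I ∈ Δ, idealSub I (idealSub I J)

/-- The ⋆-order: `I ≤⋆ J` iff `I` is `⋆_J`-closed. -/
def starle (S : NumSgp) (I J : Set ℤ) : Prop := starI S J I = I

/-- A star operation on `S`, given by its action on subsets of ℤ; it is normalized to be
the identity outside the fractional ideals, so that two star operations are equal iff they
agree on all fractional ideals. -/
structure StarOp (S : NumSgp) where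
  toFun : Set ℤ → Set ℤ
  isFrac : ∀ I, IsFracIdeal S I → IsFracIdeal S (toFun I)
  subset_star : ∀ I, IsFracIdeal S I → I ⊆ toFun I
  mono : ∀ I J, IsFracIdeal S I → IsFracIdeal S J → I ⊆ J → toFun I ⊆ toFun J
  idem : ∀ I, IsFracIdeal S I → toFun (toFun I) = toFun I
  transl : ∀ I, IsFracIdeal S I → ∀ a : ℤ,
    toFun ((fun x => a + x) '' I) = (fun x => a + x) '' toFun I
  star_S : toFun (natS S) = natS S
  default_eq : ∀ I, ¬ IsFracIdeal S I → toFun I = I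

/-- The order on star operations: `s ≤ t` iff `I^s ⊆ I^t` for every fractional ideal `I`. -/
def StarOp.le {S : NumSgp} (s t : StarOp S) : Prop :=
  ∀ I, IsFracIdeal S I → s.toFun I ⊆ t.toFun I

/-- A star operation `s` is prime if whenever `s ≥ t ∧ u` (the infimum of two star operations
being given by `I ↦ I^t ∩ I^u`), then `s ≥ t` or `s ≥ u`. -/
def StarOp.IsPrime {S : NumSgp} (s : StarOp S) : Prop :=
  ∀ t u : StarOp S,
    (∀ I, IsFracIdeal S I → t.toFun I ∩ u.toFun I ⊆ s.toFun I) →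
    t.le s ∨ u.le s

/-- `I ∈ F₀(S)` is an atom if the star operation `⋆_I` is prime. -/
def AtomIdeal (S : NumSgp) (I : Set ℤ) : Prop :=
  I ∈ F0 S ∧ ∀ t u : StarOp S,
    (∀ J, IsFracIdeal S J → t.toFun J ∩ u.toFun J ⊆ starI S I J) →
    (∀ J, IsFracIdeal S J → t.toFun J ⊆ starI S I J) ∨
    (∀ J, IsFracIdeal S J → u.toFun J ⊆ starI S I J)

/-- `M_a = {x ∈ ℕ : a − x ∉ S}`, the biggest ideal in `F₀(S)` not containing `a`. -/
def Mdual (S : NumSgp) (a : ℕ) : Set ℤ := {x : ℤ | 0 ≤ x ∧ ((a : ℤ) - x) ∉ natS S}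

/-- `Q_a(S) = {I ∈ F₀(S) : a = sup(ℕ \ I), a ∈ I^v}`. -/
def Qa (S : NumSgp) (a : ℕ) : Set (Set ℤ) :=
  {I | I ∈ F0 S ∧ (a : ℤ) ∉ I ∧ (∀ x : ℤ, (a : ℤ) < x → x ∈ I) ∧ (a : ℤ) ∈ vOp S I}

/-- The number of antichains (with respect to inclusion) of a family of ideals. -/
noncomputable def numInclAnti (Q : Set (Set ℤ)) : ℕ :=
  Set.ncard {Δ : Set (Set ℤ) | Δ ⊆ Q ∧ IsAntichain (· ⊆ ·) Δ}

/-- The `n`-th Dedekind number: the number of antichains of the power set of an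
`n`-element set, ordered by inclusion. -/
noncomputable def dedekind (n : ℕ) : ℕ :=
  Nat.card {A : Set (Set (Fin n)) // IsAntichain (· ⊆ ·) A}

/-- `T(S) = (S − M_S) \ S`. -/
def Tset (S : NumSgp) : Set ℤ :=
  idealSub (natS S) ((fun n : ℕ => (n : ℤ)) '' (S.carrier \ {0})) \ natS S

/-- The type `t(S) = |T(S)|`. -/
noncomputable def typeNum (S : NumSgp) : ℕ := (Tset S).ncard

/-- The Frobenius number `g(S)`: the largest integer not in `S`. -/
noncomputable def frob (S : NumSgp) : ℕ := sSup S.carrierᶜ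

/-- The multiplicity `μ(S)`: the smallest nonzero element of `S`. -/
noncomputable def multNum (S : NumSgp) : ℕ := sInf (S.carrier \ {0})

/-- The degree of singularity `δ(S) = |ℕ \ S|`. -/
noncomputable def deltaNum (S : NumSgp) : ℕ := S.carrierᶜ.ncard

/-- `S` is symmetric if `g(S) − a ∈ S` for every `a ∈ ℕ \ S`. -/
def IsSymmetricSgp (S : NumSgp) : Prop :=
  ∀ a : ℕ, a ∉ S.carrier → ((frob S : ℤ) - (a : ℤ)) ∈ natS S

section AuxLemmas

variable {S : NumSgp}

lemma aux_galois_unit {A B : Set ℤ} : B ⊆ idealSub A (idealSub A B) := by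
  intro b hb z hz
  rw [add_comm]
  exact hz b hb

lemma aux_idealSub_anti {A B C : Set ℤ} (h : B ⊆ C) : idealSub A C ⊆ idealSub A B :=
  fun x hx j hj => hx j (h hj)

lemma aux_idealSub_triple (A B : Set ℤ) :
    idealSub A (idealSub A (idealSub A B)) = idealSub A B :=
  Set.Subset.antisymm (aux_idealSub_anti aux_galois_unit) aux_galois_unit

lemma aux_mem_image_add {a x : ℤ} {B : Set ℤ} :
    x ∈ (fun y => a + y) '' B ↔ -a + x ∈ B := by
  constructor
  · rintro ⟨b, hb, rfl⟩; simpa using hb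
  · intro h; exact ⟨-a + x, h, by ring⟩

lemma aux_idealSub_image_right (A B : Set ℤ) (a : ℤ) :
    idealSub A ((fun y => a + y) '' B) = (fun y => -a + y) '' idealSub A B := by
  ext x
  rw [aux_mem_image_add]
  simp only [neg_neg]
  constructor
  · intro h b hb
    have := h (a + b) ⟨b, hb, rfl⟩
    rwa [show x + (a + b) = a + x + b by ring] at this
  · rintro h j ⟨b, hb, rfl⟩
    have := h b hb
    rwa [show a + x + b = x + (a + b) by ring] at this

lemma aux_idealSub_image_left (A B : Set ℤ) (a : ℤ) :
    idealSub ((fun y => a + y) '' A) B = (fun y => a + y) '' idealSub A B := by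
  ext x
  rw [aux_mem_image_add]
  constructor
  · intro h b hb
    have := h b hb
    rw [aux_mem_image_add] at this
    rwa [show -a + (x + b) = -a + x + b by ring] at this
  · intro h b hb
    rw [aux_mem_image_add, show -a + (x + b) = -a + x + b by ring]
    exact h b hb

lemma aux_image_add_add (a : ℤ) (B : Set ℤ) :
    (fun y => a + y) '' ((fun y => -a + y) '' B) = B := by
  ext x
  simp only [aux_mem_image_add, neg_neg]
  rw [show a + (-a + x) = x by ring]

lemma aux_subset_vOp (K : Set ℤ) : K ⊆ vOp S K := aux_galois_unit

lemma aux_vOp_mono {K L : Set ℤ} (h : K ⊆ L) : vOp S K ⊆ vOp S L :=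
  aux_idealSub_anti (aux_idealSub_anti h)

lemma aux_vOp_idem (K : Set ℤ) : vOp S (vOp S K) = vOp S K :=
  aux_idealSub_triple (natS S) (idealSub (natS S) K)

lemma aux_vOp_image (a : ℤ) (K : Set ℤ) :
    vOp S ((fun x => a + x) '' K) = (fun x => a + x) '' vOp S K := by
  unfold vOp
  rw [aux_idealSub_image_right, aux_idealSub_image_right]
  simp only [neg_neg]

lemma aux_subset_starI (J K : Set ℤ) : K ⊆ starI S J K :=
  fun _ hx => ⟨aux_galois_unit hx, aux_galois_unit hx⟩

lemma aux_starI_self (I : Set ℤ) : starI S I I = I := by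
  apply Set.Subset.antisymm
  · rintro x ⟨-, h2⟩
    have h0 : (0 : ℤ) ∈ idealSub I I := by intro j hj; simpa using hj
    simpa using h2 0 h0
  · exact aux_subset_starI I I

lemma aux_starI_mono (J : Set ℤ) {K L : Set ℤ} (h : K ⊆ L) : starI S J K ⊆ starI S J L :=
  Set.inter_subset_inter (aux_vOp_mono h) (aux_idealSub_anti (aux_idealSub_anti h))

lemma aux_starI_subset_vOp (J K : Set ℤ) : starI S J K ⊆ vOp S K := Set.inter_subset_left

lemma aux_starI_idem (J K : Set ℤ) : starI S J (starI S J K) = starI S J K := by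
  apply Set.Subset.antisymm
  · rintro x ⟨h1, h2⟩
    refine ⟨?_, ?_⟩
    · have := aux_vOp_mono (S := S) (aux_starI_subset_vOp J K) h1
      rwa [aux_vOp_idem] at this
    · have h3 : starI S J K ⊆ idealSub J (idealSub J K) := Set.inter_subset_right
      have h4 := aux_idealSub_anti (A := J) h3
      rw [aux_idealSub_triple] at h4
      exact aux_idealSub_anti h4 h2
  · exact aux_subset_starI J (starI S J K)

lemma aux_starI_image (J : Set ℤ) (a : ℤ) (K : Set ℤ) :
    starI S J ((fun x => a + x) '' K) = (fun x => a + x) '' starI S J K := by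
  unfold starI
  rw [aux_vOp_image, aux_idealSub_image_right, aux_idealSub_image_right]
  simp only [neg_neg]
  exact (Set.image_inter (add_right_injective a)).symm

lemma aux_starI_base_image (a : ℤ) (J K : Set ℤ) :
    starI S ((fun x => a + x) '' J) K = starI S J K := by
  unfold starI
  congr 1
  rw [aux_idealSub_image_left, aux_idealSub_image_left, aux_idealSub_image_right,
    aux_image_add_add]

lemma aux_starI_le_of_closed {I J : Set ℤ} (h : starI S J I = I) (K : Set ℤ) :
    starI S J K ⊆ starI S I K := by
  rintro x ⟨h1, h2⟩
  refine ⟨h1, ?_⟩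
  intro z hz
  have himg : (fun y => z + y) '' K ⊆ I := by
    rintro y ⟨k, hk, rfl⟩
    exact hz k hk
  have hsub : starI S J ((fun y => z + y) '' K) ⊆ I := by
    rw [← h]; exact aux_starI_mono J himg
  have hmem : z + x ∈ (fun y => z + y) '' starI S J K := ⟨x, ⟨h1, h2⟩, rfl⟩
  rw [← aux_starI_image] at hmem
  have := hsub hmem
  rwa [add_comm] at this

lemma aux_zero_mem_natS : (0 : ℤ) ∈ natS S := ⟨0, S.zero_mem, rfl⟩

lemma aux_natS_nonneg : natS S ⊆ {x : ℤ | 0 ≤ x} := by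
  rintro x ⟨n, -, rfl⟩; exact Int.natCast_nonneg n

lemma aux_natS_add {x y : ℤ} (hx : x ∈ natS S) (hy : y ∈ natS S) : x + y ∈ natS S := by
  obtain ⟨m, hm, rfl⟩ := hx; obtain ⟨n, hn, rfl⟩ := hy
  exact ⟨m + n, S.add_mem m hm n hn, by push_cast; ring⟩

lemma aux_natS_frac : IsFracIdeal S (natS S) :=
  ⟨⟨0, aux_zero_mem_natS⟩, ⟨0, fun _ hx => aux_natS_nonneg hx⟩,
    fun _ hi _ hs => aux_natS_add hi hs⟩

lemma aux_natS_large : ∃ N : ℤ, ∀ x : ℤ, N ≤ x → x ∈ natS S := by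
  obtain ⟨N, hN⟩ := S.cofinite.bddAbove
  refine ⟨(N : ℤ) + 1, fun x hx => ?_⟩
  have hx0 : (0 : ℤ) ≤ x := le_trans (by positivity) hx
  obtain ⟨n, rfl⟩ := Int.eq_ofNat_of_zero_le hx0
  refine ⟨n, ?_, rfl⟩
  by_contra hmem
  have h1 : n ≤ N := hN hmem
  have h2 : (N : ℤ) + 1 ≤ (n : ℤ) := hx
  omega

lemma aux_frac_image {K : Set ℤ} (a : ℤ) (h : IsFracIdeal S K) :
    IsFracIdeal S ((fun x => a + x) '' K) := by
  obtain ⟨⟨k, hk⟩, ⟨b, hb⟩, hadd⟩ := h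
  refine ⟨⟨a + k, k, hk, rfl⟩, ⟨a + b, ?_⟩, ?_⟩
  · rintro x ⟨y, hy, rfl⟩; exact (by have := hb hy; show a + b ≤ a + y; omega)
  · rintro i ⟨y, hy, rfl⟩ s hs
    exact ⟨y + s, hadd y hy s hs, by ring⟩

lemma aux_exists_idealSub_natS {K : Set ℤ} (hK : IsFracIdeal S K) :
    ∃ t : ℤ, t ∈ idealSub (natS S) K := by
  obtain ⟨N, hN⟩ := aux_natS_large (S := S)
  obtain ⟨b, hb⟩ := hK.2.1
  exact ⟨N - b, fun k hk => hN _ (by have := hb hk; omega)⟩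

lemma aux_vOp_bddBelow {K : Set ℤ} (hK : IsFracIdeal S K) : BddBelow (vOp S K) := by
  obtain ⟨t, ht⟩ := aux_exists_idealSub_natS hK
  refine ⟨-t, fun x hx => ?_⟩
  have h2 : (0 : ℤ) ≤ x + t := aux_natS_nonneg (hx t ht)
  omega

lemma aux_frac_starI {J K : Set ℤ} (hJ : IsFracIdeal S J) (hK : IsFracIdeal S K) :
    IsFracIdeal S (starI S J K) := by
  refine ⟨hK.1.mono (aux_subset_starI J K),
    BddBelow.mono (aux_starI_subset_vOp J K) (aux_vOp_bddBelow hK), ?_⟩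
  rintro i ⟨h1, h2⟩ s hs
  refine ⟨fun z hz => ?_, fun z hz => ?_⟩
  · rw [show i + s + z = i + z + s by ring]
    exact aux_natS_add (h1 z hz) hs
  · rw [show i + s + z = i + z + s by ring]
    exact hJ.2.2 _ (h2 z hz) s hs

lemma aux_frac_sInter {I : Set ℤ} (𝒜 : Set (Set ℤ)) (A₀ : Set ℤ) (hA₀ : A₀ ∈ 𝒜)
    (hf : ∀ A ∈ 𝒜, IsFracIdeal S A) (hc : ∀ A ∈ 𝒜, I ⊆ A) (hne : I.Nonempty) :
    IsFracIdeal S (⋂₀ 𝒜) := by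
  obtain ⟨i, hi⟩ := hne
  refine ⟨⟨i, Set.mem_sInter.mpr fun A hA => hc A hA hi⟩,
    BddBelow.mono (Set.sInter_subset_of_mem hA₀) ((hf A₀ hA₀).2.1), ?_⟩
  intro x hx s hs
  rw [Set.mem_sInter]
  intro A hA
  exact (hf A hA).2.2 x (Set.mem_sInter.mp hx A hA) s hs

lemma aux_starop_le_v (t : StarOp S) {K : Set ℤ} (hK : IsFracIdeal S K) :
    t.toFun K ⊆ vOp S K := by
  intro x hx z hz
  have himg : (fun y => z + y) '' K ⊆ natS S := by
    rintro y ⟨k, hk, rfl⟩; exact hz k hk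
  have h1 : t.toFun ((fun y => z + y) '' K) ⊆ natS S := by
    have := t.mono _ _ (aux_frac_image z hK) aux_natS_frac himg
    rwa [t.star_S] at this
  have hmem : z + x ∈ t.toFun ((fun y => z + y) '' K) := by
    rw [t.transl K hK z]
    exact ⟨x, hx, rfl⟩
  have := h1 hmem
  rwa [add_comm] at this

lemma aux_KFB (t : StarOp S) {I : Set ℤ} (hIf : IsFracIdeal S I) (h : t.toFun I = I)
    {K : Set ℤ} (hK : IsFracIdeal S K) : t.toFun K ⊆ starI S I K := by
  intro x hx
  refine ⟨aux_starop_le_v t hK hx, ?_⟩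
  intro z hz
  have himg : (fun y => z + y) '' K ⊆ I := by
    rintro y ⟨k, hk, rfl⟩; exact hz k hk
  have h1 : t.toFun ((fun y => z + y) '' K) ⊆ I := by
    have := t.mono _ _ (aux_frac_image z hK) hIf himg
    rwa [h] at this
  have hmem : z + x ∈ t.toFun ((fun y => z + y) '' K) := by
    rw [t.transl K hK z]
    exact ⟨x, hx, rfl⟩
  have := h1 hmem
  rwa [add_comm] at this

lemma aux_vOp_natS : vOp S (natS S) = natS S := by
  have h1 : idealSub (natS S) (natS S) = natS S := by
    apply Set.Subset.antisymm
    · intro x hx; simpa using hx 0 aux_zero_mem_natS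
    · intro x hx j hj; exact aux_natS_add hx hj
  unfold vOp
  rw [h1, h1]

open Classical in
noncomputable def starOpOf (S : NumSgp) (J : Set ℤ) (hJ : IsFracIdeal S J) : StarOp S where
  toFun K := if IsFracIdeal S K then starI S J K else K
  isFrac K hK := by rw [if_pos hK]; exact aux_frac_starI hJ hK
  subset_star K hK := by rw [if_pos hK]; exact aux_subset_starI J K
  mono K L hK hL h := by rw [if_pos hK, if_pos hL]; exact aux_starI_mono J h
  idem K hK := by rw [if_pos hK, if_pos (aux_frac_starI hJ hK), aux_starI_idem]
  transl K hK a := by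
    rw [if_pos hK, if_pos (aux_frac_image a hK)]
    exact aux_starI_image J a K
  star_S := by
    rw [if_pos aux_natS_frac]
    apply Set.Subset.antisymm
    · intro x hx
      have := hx.1
      rwa [aux_vOp_natS] at this
    · exact aux_subset_starI J (natS S)
  default_eq K hK := by rw [if_neg hK]

lemma starOpOf_apply (S : NumSgp) (J : Set ℤ) (hJ : IsFracIdeal S J) {K : Set ℤ}
    (hK : IsFracIdeal S K) : (starOpOf S J hJ).toFun K = starI S J K := by
  simp only [starOpOf]
  rw [if_pos hK]

lemma aux_exists_F0_rep {J : Set ℤ} (hJ : IsFracIdeal S J) :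
    ∃ J' ∈ F0 S, ∀ K : Set ℤ, starI S J' K = starI S J K := by
  classical
  obtain ⟨b, hb⟩ := hJ.2.1
  obtain ⟨m, hm, hmin⟩ := Int.exists_least_of_bdd
    (P := fun z => z ∈ J) ⟨b, fun z hz => hb hz⟩ hJ.1
  refine ⟨(fun x => -m + x) '' J, ⟨aux_frac_image _ hJ, ?_, ?_⟩,
    fun K => aux_starI_base_image (-m) J K⟩
  · intro s hs
    exact ⟨m + s, hJ.2.2 m hm s hs, by ring⟩
  · rintro x ⟨j, hj, rfl⟩
    have := hmin j hj
    simp only [Set.mem_setOf_eq]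
    omega

lemma aux_main {I : Set ℤ} (hIf : IsFracIdeal S I)
    (h4 : ∀ J₁ J₂ : Set ℤ, IsFracIdeal S J₁ → IsFracIdeal S J₂ → I = J₁ ∩ J₂ →
      starI S J₁ I = I ∨ starI S J₂ I = I) :
    ∀ l : List (Set ℤ), l ≠ [] → (∀ A ∈ l, IsFracIdeal S A) →
      (∀ x : ℤ, (∀ A ∈ l, x ∈ starI S A I) → x ∈ I) → ∃ A ∈ l, starI S A I = I := by
  intro l
  induction l with
  | nil => intro h _ _; exact absurd rfl h
  | cons A rest ih =>
    intro _ hf hx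
    have hAf : IsFracIdeal S A := hf A (List.mem_cons_self)
    by_cases hrest : rest = []
    · subst hrest
      refine ⟨A, List.mem_cons_self, Set.Subset.antisymm ?_ (aux_subset_starI A I)⟩
      intro y hy
      refine hx y ?_
      intro B hB
      rw [List.mem_singleton.mp hB]
      exact hy
    · set D : Set ℤ := ⋂₀ {B | ∃ C ∈ rest, B = starI S C I} with hDdef
      obtain ⟨C₀, hC₀⟩ := List.exists_mem_of_ne_nil rest hrest
      have hrf : ∀ C ∈ rest, IsFracIdeal S C := fun C hC => hf C (List.mem_cons_of_mem A hC)
      have hDmem : ∀ (x : ℤ), x ∈ D ↔ ∀ C ∈ rest, x ∈ starI S C I := by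
        intro x
        constructor
        · intro hxD C hC
          exact Set.mem_sInter.mp hxD _ ⟨C, hC, rfl⟩
        · intro hall
          rw [Set.mem_sInter]
          rintro B ⟨C, hC, rfl⟩
          exact hall C hC
      have hDf : IsFracIdeal S D := by
        refine aux_frac_sInter _ (starI S C₀ I) ⟨C₀, hC₀, rfl⟩ ?_ ?_ hIf.1
        · rintro B ⟨C, hC, rfl⟩; exact aux_frac_starI (hrf C hC) hIf
        · rintro B ⟨C, hC, rfl⟩; exact aux_subset_starI C I
      have hA'f : IsFracIdeal S (starI S A I) := aux_frac_starI hAf hIf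
      have hsplit : I = starI S A I ∩ D := by
        apply Set.Subset.antisymm
        · intro y hy
          exact ⟨aux_subset_starI A I hy, (hDmem y).mpr fun C hC => aux_subset_starI C I hy⟩
        · rintro y ⟨hy1, hy2⟩
          refine hx y ?_
          intro B hB
          rcases List.mem_cons.mp hB with rfl | hB
          · exact hy1
          · exact (hDmem y).mp hy2 B hB
      rcases h4 (starI S A I) D hA'f hDf hsplit with hcase | hcase
      · refine ⟨A, List.mem_cons_self, Set.Subset.antisymm ?_ (aux_subset_starI A I)⟩
        have h1 : starI S A I ⊆ starI S (starI S A I) I :=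
          aux_starI_le_of_closed (aux_starI_idem A I) I
        intro y hy
        have := h1 hy
        rwa [hcase] at this
      · have hDsubstar : D ⊆ starI S D I := by
          intro d hd
          refine ⟨aux_starI_subset_vOp C₀ I ((hDmem d).mp hd C₀ hC₀), ?_⟩
          intro z hz
          refine (hDmem (d + z)).mpr ?_
          intro C hC
          have hdC : d ∈ starI S C I := (hDmem d).mp hd C hC
          have himg : (fun y => z + y) '' I ⊆ starI S C I := by
            rintro y ⟨i, hi, rfl⟩
            exact (hDmem (z + i)).mp (hz i hi) C hC
          have hsub : starI S C ((fun y => z + y) '' I) ⊆ starI S C I := by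
            have := aux_starI_mono (S := S) C himg
            rwa [aux_starI_idem] at this
          have hmem : z + d ∈ (fun y => z + y) '' starI S C I := ⟨d, hdC, rfl⟩
          rw [← aux_starI_image] at hmem
          have := hsub hmem
          rwa [add_comm] at this
        have hDI : D ⊆ I := fun d hd => hcase ▸ hDsubstar hd
        obtain ⟨C, hC, hCeq⟩ := ih hrest (fun C hC => hrf C hC)
          (fun x hx' => hDI ((hDmem x).mpr fun C hC => hx' C hC))
        exact ⟨C, List.mem_cons_of_mem A hC, hCeq⟩

end AuxLemmas

/-- Characterizations of atoms of `G₀(S)`. -/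
theorem atom_tfae (S : NumSgp) (I : Set ℤ) (hI : I ∈ G0 S) :
    List.TFAE [
      -- (i) `I` is an atom
      AtomIdeal S I,
      -- (ii) `I` is `(⋆₁ ∧ ⋆₂)`-closed iff it is `⋆₁`- or `⋆₂`-closed
      ∀ t u : StarOp S, (t.toFun I ∩ u.toFun I = I ↔ (t.toFun I = I ∨ u.toFun I = I)),
      -- (iii) if `⋆_I ≥ ⋆_{J₁} ∧ ⋆_{J₂}` for `J₁, J₂ ∈ F₀(S)` then `⋆_I ≥ ⋆_{J₁}` or `⋆_I ≥ ⋆_{J₂}`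
      ∀ J₁ ∈ F0 S, ∀ J₂ ∈ F0 S,
        (∀ K, IsFracIdeal S K → starI S J₁ K ∩ starI S J₂ K ⊆ starI S I K) →
        (∀ K, IsFracIdeal S K → starI S J₁ K ⊆ starI S I K) ∨
        (∀ K, IsFracIdeal S K → starI S J₂ K ⊆ starI S I K),
      -- (iv) if `I = J₁ ∩ J₂` then `I` is `⋆_{J₁}`- or `⋆_{J₂}`-closed
      ∀ J₁ J₂ : Set ℤ, IsFracIdeal S J₁ → IsFracIdeal S J₂ → I = J₁ ∩ J₂ →
        starI S J₁ I = I ∨ starI S J₂ I = I,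
      -- (v) `I` is `(⋆₁ ∧ ⋯ ∧ ⋆ₙ)`-closed iff it is `⋆ᵢ`-closed for some `i`
      ∀ n : ℕ, 1 ≤ n → ∀ f : Fin n → StarOp S,
        ((⋂ i, (f i).toFun I) = I ↔ ∃ i, (f i).toFun I = I),
      -- (vi) for every set `Δ` of fractional ideals, `I = I^{⋆_Δ}` iff `I ≤⋆ J` for some `J ∈ Δ`
      ∀ Δ : Set (Set ℤ), (∀ J ∈ Δ, IsFracIdeal S J) →
        (starD S Δ I = I ↔ ∃ J ∈ Δ, starle S I J)
    ] := by
  obtain ⟨hIF0, hIv⟩ := hI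
  have hIf : IsFracIdeal S I := hIF0.1
  tfae_have 1 → 3 := by
    intro h1 J₁ hJ₁ J₂ hJ₂ hyp
    rcases h1.2 (starOpOf S J₁ hJ₁.1) (starOpOf S J₂ hJ₂.1)
        (fun K hK => by
          rw [starOpOf_apply S J₁ hJ₁.1 hK, starOpOf_apply S J₂ hJ₂.1 hK]
          exact hyp K hK) with h | h
    · left
      intro K hK
      have := h K hK
      rwa [starOpOf_apply S J₁ hJ₁.1 hK] at this
    · right
      intro K hK
      have := h K hK
      rwa [starOpOf_apply S J₂ hJ₂.1 hK] at this
  tfae_have 3 → 4 := by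
    intro h3 J₁ J₂ hJ₁ hJ₂ hEq
    obtain ⟨J₁', hJ₁'F, hs₁⟩ := aux_exists_F0_rep hJ₁
    obtain ⟨J₂', hJ₂'F, hs₂⟩ := aux_exists_F0_rep hJ₂
    have key : ∀ K, IsFracIdeal S K → starI S J₁' K ∩ starI S J₂' K ⊆ starI S I K := by
      intro K _ x hx
      obtain ⟨hx₁, hx₂⟩ := hx
      rw [hs₁] at hx₁
      rw [hs₂] at hx₂
      refine ⟨hx₁.1, ?_⟩
      intro z hz
      rw [hEq]
      constructor
      · exact hx₁.2 z (fun k hk => by have := hz k hk; rw [hEq] at this; exact this.1)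
      · exact hx₂.2 z (fun k hk => by have := hz k hk; rw [hEq] at this; exact this.2)
    rcases h3 J₁' hJ₁'F J₂' hJ₂'F key with h | h
    · left
      have := h I hIf
      rw [hs₁, aux_starI_self] at this
      exact Set.Subset.antisymm this (aux_subset_starI J₁ I)
    · right
      have := h I hIf
      rw [hs₂, aux_starI_self] at this
      exact Set.Subset.antisymm this (aux_subset_starI J₂ I)
  tfae_have 4 → 5 := by
    intro h4 n hn f
    constructor
    · intro h
      set l : List (Set ℤ) := (List.finRange n).map fun i => (f i).toFun I with hl
      have hlne : l ≠ [] := by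
        intro hcon
        have := congrArg List.length hcon
        simp [hl] at this
        omega
      have hlf : ∀ A ∈ l, IsFracIdeal S A := by
        intro A hA
        obtain ⟨i, -, rfl⟩ := List.mem_map.mp hA
        exact (f i).isFrac I hIf
      have hhyp : ∀ x : ℤ, (∀ A ∈ l, x ∈ starI S A I) → x ∈ I := by
        intro x hx
        rw [← h]
        refine Set.mem_iInter.mpr fun i => ?_
        have hxi := hx ((f i).toFun I) (List.mem_map.mpr ⟨i, List.mem_finRange i, rfl⟩)
        have h0 : (0 : ℤ) ∈ idealSub ((f i).toFun I) I := by
          intro j hj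
          simpa using (f i).subset_star I hIf hj
        simpa using hxi.2 0 h0
      obtain ⟨A, hAl, hAeq⟩ := aux_main hIf h4 l hlne hlf hhyp
      obtain ⟨i, -, rfl⟩ := List.mem_map.mp hAl
      refine ⟨i, ?_⟩
      have hclosed : (f i).toFun ((f i).toFun I) = (f i).toFun I := (f i).idem I hIf
      have hsub : (f i).toFun I ⊆ I := by
        have h1 := aux_KFB (f i) ((f i).isFrac I hIf) hclosed hIf
        have h2 := aux_starI_le_of_closed hAeq I
        intro y hy
        have := h2 (h1 hy)
        rwa [aux_starI_self] at this
      exact Set.Subset.antisymm hsub ((f i).subset_star I hIf)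
    · rintro ⟨i, hi⟩
      apply Set.Subset.antisymm
      · intro x hx
        have := Set.mem_iInter.mp hx i
        rwa [hi] at this
      · intro x hx
        exact Set.mem_iInter.mpr fun j => (f j).subset_star I hIf hx
  tfae_have 5 → 2 := by
    intro h5 t u
    have h2 := h5 2 (by norm_num) ![t, u]
    have hiI : (⋂ i : Fin 2, (![t, u] i).toFun I) = t.toFun I ∩ u.toFun I := by
      ext x
      simp [Set.mem_iInter, Fin.forall_fin_two]
    constructor
    · intro h
      obtain ⟨i, hi⟩ := h2.mp (by rw [hiI]; exact h)
      fin_cases i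
      · left; simpa using hi
      · right; simpa using hi
    · intro h
      rcases h with h | h
      · apply Set.Subset.antisymm
        · intro x hx
          rw [← h]
          exact hx.1
        · intro x hx
          exact ⟨t.subset_star I hIf hx, u.subset_star I hIf hx⟩
      · apply Set.Subset.antisymm
        · intro x hx
          rw [← h]
          exact hx.2
        · intro x hx
          exact ⟨t.subset_star I hIf hx, u.subset_star I hIf hx⟩
  tfae_have 2 → 1 := by
    intro h2
    refine ⟨hIF0, fun t u hyp => ?_⟩
    have htu : t.toFun I ∩ u.toFun I = I := by
      apply Set.Subset.antisymm
      · intro x hx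
        have := hyp I hIf hx
        rwa [aux_starI_self] at this
      · intro x hx
        exact ⟨t.subset_star I hIf hx, u.subset_star I hIf hx⟩
    rcases (h2 t u).mp htu with h | h
    · exact Or.inl fun J hJ => aux_KFB t hIf h hJ
    · exact Or.inr fun J hJ => aux_KFB u hIf h hJ
  tfae_have 4 → 6 := by
    intro h4 Δ hΔ
    constructor
    · intro h
      have hnd : vOp S I ≠ I := hIv
      obtain ⟨N, hN⟩ := aux_natS_large (S := S)
      obtain ⟨b, hb⟩ := aux_vOp_bddBelow hIf
      have hVfin : (vOp S I \ I).Finite := by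
        apply Set.Finite.subset (Set.finite_Icc b N)
        rintro x ⟨hxv, hxI⟩
        refine ⟨hb hxv, ?_⟩
        by_contra hcon
        push_neg at hcon
        exact hxI (hIF0.2.1 (hN x (by omega)))
      have hVne : (vOp S I \ I).Nonempty := by
        rw [Set.diff_nonempty]
        intro hsub
        exact hnd (Set.Subset.antisymm hsub (aux_subset_vOp I))
      have hch : ∀ a : ℤ, a ∈ vOp S I \ I → ∃ J, J ∈ Δ ∧ a ∉ idealSub J (idealSub J I) := by
        rintro a ⟨hav, haI⟩
        by_contra hcon
        push_neg at hcon
        apply haI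
        rw [← h]
        exact ⟨hav, Set.mem_iInter₂.mpr hcon⟩
      choose! g hg1 hg2 using hch
      set l : List (Set ℤ) := hVfin.toFinset.toList.map g with hl
      have hlne : l ≠ [] := by
        have h1 : hVfin.toFinset.Nonempty := (Set.Finite.toFinset_nonempty hVfin).mpr hVne
        intro hcon
        rw [hl, List.map_eq_nil_iff, Finset.toList_eq_nil] at hcon
        exact h1.ne_empty hcon
      have hlf : ∀ A ∈ l, IsFracIdeal S A := by
        intro A hA
        obtain ⟨a, ha, rfl⟩ := List.mem_map.mp hA
        rw [Finset.mem_toList, Set.Finite.mem_toFinset] at ha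
        exact hΔ _ (hg1 a ha)
      have hhyp : ∀ x : ℤ, (∀ A ∈ l, x ∈ starI S A I) → x ∈ I := by
        intro x hx
        by_contra hxI
        obtain ⟨A₀, hA₀⟩ := List.exists_mem_of_ne_nil l hlne
        have hxV : x ∈ vOp S I \ I := ⟨(hx A₀ hA₀).1, hxI⟩
        have hgl : g x ∈ l := List.mem_map.mpr
          ⟨x, by rw [Finset.mem_toList, Set.Finite.mem_toFinset]; exact hxV, rfl⟩
        exact hg2 x hxV (hx (g x) hgl).2
      obtain ⟨A, hAl, hAeq⟩ := aux_main hIf h4 l hlne hlf hhyp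
      obtain ⟨a, ha, rfl⟩ := List.mem_map.mp hAl
      rw [Finset.mem_toList, Set.Finite.mem_toFinset] at ha
      exact ⟨g a, hg1 a ha, hAeq⟩
    · rintro ⟨J, hJΔ, hst⟩
      have hst' : starI S J I = I := hst
      apply Set.Subset.antisymm
      · rintro x ⟨hv, hint⟩
        have hx2 : x ∈ idealSub J (idealSub J I) := Set.mem_iInter₂.mp hint J hJΔ
        have hmem : x ∈ starI S J I := ⟨hv, hx2⟩
        rwa [hst'] at hmem
      · intro x hx
        exact ⟨aux_subset_vOp I hx, Set.mem_iInter₂.mpr fun J' _ => aux_galois_unit hx⟩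
  tfae_have 6 → 3 := by
    intro h6 J₁ hJ₁ J₂ hJ₂ hyp
    have hpair : ∀ J ∈ ({J₁, J₂} : Set (Set ℤ)), IsFracIdeal S J := by
      intro J hJ
      rcases Set.mem_insert_iff.mp hJ with rfl | hJ
      · exact hJ₁.1
      · rw [Set.mem_singleton_iff] at hJ
        subst hJ
        exact hJ₂.1
    have hD : starD S {J₁, J₂} I = I := by
      apply Set.Subset.antisymm
      · rintro x ⟨hv, hint⟩
        have h1 : x ∈ idealSub J₁ (idealSub J₁ I) :=
          Set.mem_iInter₂.mp hint J₁ (by simp)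
        have h2 : x ∈ idealSub J₂ (idealSub J₂ I) :=
          Set.mem_iInter₂.mp hint J₂ (by simp)
        have := hyp I hIf ⟨⟨hv, h1⟩, ⟨hv, h2⟩⟩
        rwa [aux_starI_self] at this
      · intro x hx
        exact ⟨aux_subset_vOp I hx, Set.mem_iInter₂.mpr fun J _ => aux_galois_unit hx⟩
    obtain ⟨J, hJmem, hst⟩ := (h6 {J₁, J₂} hpair).mp hD
    have hst' : starI S J I = I := hst
    rcases Set.mem_insert_iff.mp hJmem with rfl | hJmem
    · exact Or.inl fun K _ => aux_starI_le_of_closed hst' K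
    · rw [Set.mem_singleton_iff] at hJmem
      subst hJmem
      exact Or.inr fun K _ => aux_starI_le_of_closed hst' K
  tfae_finish
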